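/- For any probability vector (p_i)_{i∈Ω} on a finite set Ω with ∑_{i∈Ω} p_i(1−p_i) > 0, we have (∑_{i∈Ω} p_i^2(1−p_i)) / (∑_{i∈Ω} p_i(1−p_i)) ≤ ∑_{i∈Ω} p_i^2. -/

import Mathlib

/-!
Write `S₂ = ∑ pᵢ²` and `S₃ = ∑ pᵢ³`. Since `∑ pᵢ = 1`, the numerator is `S₂ - S₃` and the
denominator is `1 - S₂`, so the claim is `S₂ ^ 2 ≤ S₃`. This is Cauchy–Schwarz for the vectors
`(√pᵢ)` and `(pᵢ √pᵢ)`: `S₂ ^ 2 ≤ (∑ pᵢ) S₃`.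
-/

open Finset

theorem Finset.sq_sum_sq_le_sum_mul_sum_pow_three {ι R : Type*} [CommSemiring R] [LinearOrder R]
    [IsStrictOrderedRing R] [ExistsAddOfLE R] (s : Finset ι) {p : ι → R}
    (hp : ∀ i ∈ s, 0 ≤ p i) :
    (∑ i ∈ s, p i ^ 2) ^ 2 ≤ (∑ i ∈ s, p i) * ∑ i ∈ s, p i ^ 3 :=
  sum_sq_le_sum_mul_sum_of_sq_le_mul s hp (fun i hi => pow_nonneg (hp i hi) 3)
    (fun i _ => (by ring : (p i ^ 2) ^ 2 = p i * p i ^ 3).le)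

theorem conditional_match_le {Ω : Type*} [Fintype Ω] (p : Ω → ℝ)
    (hp : ∀ i, 0 ≤ p i) (hsum : ∑ i, p i = 1)
    (hpos : 0 < ∑ i, p i * (1 - p i)) :
    (∑ i, (p i) ^ 2 * (1 - p i)) / (∑ i, p i * (1 - p i)) ≤ ∑ i, (p i) ^ 2 := by
  have hS₂S₃ := univ.sq_sum_sq_le_sum_mul_sum_pow_three (fun i _ => hp i)
  rw [hsum, one_mul] at hS₂S₃
  have hnum : ∑ i, p i ^ 2 * (1 - p i) = ∑ i, p i ^ 2 - ∑ i, p i ^ 3 := by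
    simp only [mul_one_sub, sum_sub_distrib, ← pow_succ]
  have hden : ∑ i, p i * (1 - p i) = 1 - ∑ i, p i ^ 2 := by
    simp only [mul_one_sub, sum_sub_distrib, hsum, sq]
  rw [div_le_iff₀ hpos, hnum, hden]
  linear_combination hS₂S₃
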